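/- arXiv:1203.1522 — 2 statements merged into one kernel-verified Lean document; each statement's English description precedes it below -/
import Mathlib

section
/- Let 𝒢 be a subgroup of the multiplicative semigroup of n×n matrices over the tropical semiring, let E be the neutral element of 𝒢, and suppose that every matrix in 𝒢 has full row rank. Then for every G ∈ 𝒢 there exists a unique monomial tropical n×n matrix P_G such that G = P_G ⊗ E, and the map ψ : G ↦ P_G is an injective multiplication-preserving map from 𝒢 into the monomial tropical n×n matrices, i.e., ψ(G ⊗ H) = ψ(G) ⊗ ψ(H) for all G, H ∈ 𝒢. -/
/-- The tropical (max-plus) semiring carrier: `ℝ ∪ {-∞}`, with `⊥` playing the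
role of `-∞`. -/
abbrev Trop : Type := WithBot ℝ

/-- Tropical matrix multiplication: `(A ⊗ B) i j = max_k (A i k + B k j)`. -/
def tropMulMat {n m p : ℕ} (A : Matrix (Fin n) (Fin m) Trop)
    (B : Matrix (Fin m) (Fin p) Trop) : Matrix (Fin n) (Fin p) Trop :=
  fun i j => Finset.univ.sup fun k => A i k + B k j

/-- A tropical matrix has full row rank if no row is a tropical linear
combination of the other rows. -/
def FullRowRank {n m : ℕ} (B : Matrix (Fin n) (Fin m) Trop) : Prop :=
  ¬ ∃ (i : Fin n) (lam : Fin n → Trop),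
      ∀ t, B i t = (Finset.univ.erase i).sup fun k => lam k + B k t

/-- A tropical square matrix is monomial if there is a permutation `σ` with
`P i j ≠ -∞ ↔ i = σ j`. -/
def IsMonomial {n : ℕ} (P : Matrix (Fin n) (Fin n) Trop) : Prop :=
  ∃ σ : Equiv.Perm (Fin n), ∀ i j, P i j ≠ ⊥ ↔ i = σ j

/-- A subset of the semigroup of tropical `n×n` matrices which is closed under
tropical matrix multiplication and forms a group under it. -/
def IsMatSubgroup {n : ℕ} (S : Set (Matrix (Fin n) (Fin n) Trop)) : Prop :=
  (∀ A ∈ S, ∀ B ∈ S, tropMulMat A B ∈ S) ∧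
  ∃ E ∈ S, (∀ A ∈ S, tropMulMat E A = A ∧ tropMulMat A E = A) ∧
    ∀ A ∈ S, ∃ B ∈ S, tropMulMat A B = E ∧ tropMulMat B A = E

/-!
Since `E` is idempotent of full row rank, its diagonal is `0`. If `G ⊗ G' = G' ⊗ G = E`,
the entry `(G ⊗ G') i i = 0` provides `k` with `G i k + G' k i = 0`, and squeezing `G i t`
between `(G ⊗ E) i t` and `G i k + (G' ⊗ G) k t` shows that row `i` of `G` is `G i k` plus
row `k` of `E`. Full row rank of `G` makes `i ↦ k` injective, so `G = P ⊗ E` for a monomial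
`P`; full row rank of `E` makes `P` unique, and uniqueness turns `G ↦ P` into a homomorphism
because monomial matrices are closed under products.
-/

open Finset

theorem Finset.sup_eq_of_forall_ne_eq_bot {ι α : Type*} [DecidableEq ι] [SemilatticeSup α]
    [OrderBot α] {s : Finset ι} {f : ι → α} {j : ι} (hj : j ∈ s)
    (h : ∀ k ∈ s, k ≠ j → f k = ⊥) : s.sup f = f j := by
  rw [← insert_erase hj, sup_insert, (Finset.sup_eq_bot_iff _ _).2 fun k hk =>
    h k (mem_of_mem_erase hk) (ne_of_mem_erase hk), sup_bot_eq]

namespace Trop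

theorem add_sup {ι : Type*} (c : Trop) (s : Finset ι) (f : ι → Trop) :
    c + s.sup f = s.sup fun k => c + f k :=
  apply_sup_eq_sup_comp_of_linearOrder (c + ·) (fun _ _ h => add_le_add_right h c)
    (WithBot.add_bot c)

theorem sup_add {ι : Type*} (s : Finset ι) (f : ι → Trop) (c : Trop) :
    s.sup f + c = s.sup fun k => f k + c := by
  simp only [add_comm _ c, add_sup]

theorem eq_coe_sub_add_of_coe_add_eq {a b : ℝ} {x y : Trop} (h : (a : Trop) + x = b + y) :
    x = ((b - a : ℝ) : Trop) + y := by
  calc x = ((-a + a : ℝ) : Trop) + x := by simp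
    _ = ((-a : ℝ) : Trop) + (b + y) := by rw [WithBot.coe_add, add_assoc, h]
    _ = ((b - a : ℝ) : Trop) + y := by rw [← add_assoc, ← WithBot.coe_add, neg_add_eq_sub]

end Trop

theorem tropMulMat_apply {n m p : ℕ} (A : Matrix (Fin n) (Fin m) Trop)
    (B : Matrix (Fin m) (Fin p) Trop) (i : Fin n) (j : Fin p) :
    tropMulMat A B i j = univ.sup fun k => A i k + B k j :=
  rfl

theorem tropMulMat_assoc {n m p q : ℕ} (A : Matrix (Fin n) (Fin m) Trop)
    (B : Matrix (Fin m) (Fin p) Trop) (C : Matrix (Fin p) (Fin q) Trop) :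
    tropMulMat (tropMulMat A B) C = tropMulMat A (tropMulMat B C) := by
  ext i j
  simp only [tropMulMat_apply, Trop.sup_add, Trop.add_sup, add_assoc]
  exact Finset.sup_comm _ _ _

namespace FullRowRank

variable {n m : ℕ} {B : Matrix (Fin n) (Fin m) Trop}

theorem exists_ne_bot (hB : FullRowRank B) (i : Fin n) : ∃ t, B i t ≠ ⊥ := by
  by_contra! h
  exact hB ⟨i, fun _ => ⊥, fun t => by simp [h]⟩

theorem eq_of_row_eq_add_row (hB : FullRowRank B) {i j : Fin n} {c : Trop}
    (h : ∀ t, B i t = c + B j t) : i = j := by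
  by_contra hij
  refine hB ⟨i, fun k => if k = j then c else ⊥, fun t => ?_⟩
  rw [h t, sup_eq_of_forall_ne_eq_bot (mem_erase.2 ⟨Ne.symm hij, mem_univ j⟩)
    fun k _ hk => by simp [hk]]
  simp

theorem diag_eq_zero_of_idempotent {E : Matrix (Fin n) (Fin n) Trop} (hE : FullRowRank E)
    (hEE : tropMulMat E E = E) (i : Fin n) : E i i = 0 := by
  set R : Fin n → Trop := fun t => (univ.erase i).sup fun k => E i k + E k t
  have hsplit : ∀ t, E i t = (E i i + E i t) ⊔ R t := fun t => by
    conv_lhs => rw [← hEE]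
    rw [tropMulMat_apply, ← insert_erase (mem_univ i), sup_insert]
  obtain ⟨t, ht⟩ : ∃ t, E i t ≠ R t := by
    by_contra! h
    exact hE ⟨i, E i, h⟩
  have hfix : E i t = E i i + E i t := by
    rcases max_choice (E i i + E i t) (R t) with h | h
    · exact (hsplit t).trans h
    · exact absurd ((hsplit t).trans h) ht
  have hne : E i t ≠ ⊥ := by
    intro hb
    have hR : R t ≤ E i t := le_sup_right.trans_eq (hsplit t).symm
    rw [hb, le_bot_iff] at hR
    exact ht (hb.trans hR.symm)
  exact WithBot.add_right_cancel hne (hfix.symm.trans (zero_add _).symm)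

end FullRowRank

def monomialMat {n : ℕ} (σ : Equiv.Perm (Fin n)) (d : Fin n → ℝ) :
    Matrix (Fin n) (Fin n) Trop :=
  fun i j => if i = σ j then (d i : Trop) else ⊥

section Monomial

variable {n : ℕ}

theorem isMonomial_monomialMat (σ : Equiv.Perm (Fin n)) (d : Fin n → ℝ) :
    IsMonomial (monomialMat σ d) :=
  ⟨σ, fun i j => by by_cases h : i = σ j <;> simp [monomialMat, h]⟩

theorem IsMonomial.exists_eq_monomialMat {P : Matrix (Fin n) (Fin n) Trop} (hP : IsMonomial P) :
    ∃ σ d, P = monomialMat σ d := by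
  obtain ⟨σ, hσ⟩ := hP
  refine ⟨σ, fun i => (P i (σ.symm i)).unbot ((hσ _ _).2 (σ.apply_symm_apply i).symm), ?_⟩
  ext i j
  by_cases h : i = σ j
  · subst h
    simp [monomialMat]
  · simpa [monomialMat, h] using (hσ i j).not.2 h

theorem monomialMat_mul_apply {m : ℕ} (σ : Equiv.Perm (Fin n)) (d : Fin n → ℝ)
    (A : Matrix (Fin n) (Fin m) Trop) (i : Fin n) (j : Fin m) :
    tropMulMat (monomialMat σ d) A i j = d i + A (σ.symm i) j := by
  rw [tropMulMat_apply, sup_eq_of_forall_ne_eq_bot (mem_univ (σ.symm i))]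
  · simp [monomialMat]
  · intro k _ hk
    simp [monomialMat, ← σ.symm_apply_eq, Ne.symm hk]

theorem monomialMat_mul_monomialMat (σ τ : Equiv.Perm (Fin n)) (d e : Fin n → ℝ) :
    tropMulMat (monomialMat σ d) (monomialMat τ e) =
      monomialMat (σ * τ) fun i => d i + e (σ.symm i) := by
  ext i j
  rw [monomialMat_mul_apply]
  simp only [monomialMat, Equiv.Perm.mul_apply, ← σ.symm_apply_eq]
  split_ifs <;> simp

theorem IsMonomial.mul {P Q : Matrix (Fin n) (Fin n) Trop} (hP : IsMonomial P)
    (hQ : IsMonomial Q) : IsMonomial (tropMulMat P Q) := by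
  obtain ⟨σ, d, rfl⟩ := hP.exists_eq_monomialMat
  obtain ⟨τ, e, rfl⟩ := hQ.exists_eq_monomialMat
  rw [monomialMat_mul_monomialMat]
  exact isMonomial_monomialMat _ _

theorem IsMonomial.eq_of_tropMulMat_eq {P Q E : Matrix (Fin n) (Fin n) Trop} (hP : IsMonomial P)
    (hQ : IsMonomial Q) (hE : FullRowRank E) (h : tropMulMat P E = tropMulMat Q E) : P = Q := by
  obtain ⟨σ, d, rfl⟩ := hP.exists_eq_monomialMat
  obtain ⟨τ, e, rfl⟩ := hQ.exists_eq_monomialMat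
  have hrow : ∀ i t, (d i : Trop) + E (σ.symm i) t = e i + E (τ.symm i) t := fun i t => by
    rw [← monomialMat_mul_apply, ← monomialMat_mul_apply, h]
  have hperm : σ.symm = τ.symm := Equiv.ext fun i =>
    hE.eq_of_row_eq_add_row fun t => Trop.eq_coe_sub_add_of_coe_add_eq (hrow i t)
  have hd : d = e := funext fun i => by
    obtain ⟨t, ht⟩ := hE.exists_ne_bot (τ.symm i)
    have hi := hrow i t
    rw [hperm] at hi
    exact WithBot.coe_injective (WithBot.add_right_cancel ht hi)
  rw [Equiv.symm_bijective.injective hperm, hd]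

end Monomial

section Inverse

variable {n : ℕ} {E G G' : Matrix (Fin n) (Fin n) Trop}

theorem exists_row_eq_coe_add_row (hdiag : ∀ i, E i i = 0) (hGE : tropMulMat G E = G)
    (hGG' : tropMulMat G G' = E) (hG'G : tropMulMat G' G = E) (i : Fin n) :
    ∃ k, ∃ a : ℝ, ∀ t, G i t = a + E k t := by
  obtain ⟨k, -, hk⟩ := exists_mem_eq_sup univ ⟨i, mem_univ i⟩ fun k => G i k + G' k i
  have hk0 : G i k + G' k i = 0 := by rw [← hk, ← tropMulMat_apply, hGG', hdiag]
  have hne : G i k ≠ ⊥ := fun hb => by simp [hb] at hk0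
  obtain ⟨a, ha⟩ := WithBot.ne_bot_iff_exists.1 hne
  refine ⟨k, a, fun t => le_antisymm ?_ ?_⟩
  · have hle : G' k i + G i t ≤ E k t := by
      rw [← hG'G, tropMulMat_apply]
      exact le_sup (f := fun l => G' k l + G l t) (mem_univ i)
    calc G i t = G i k + (G' k i + G i t) := by rw [← add_assoc, hk0, zero_add]
      _ ≤ a + E k t := by rw [ha]; gcongr
  · conv_rhs => rw [← hGE]
    rw [ha, tropMulMat_apply]
    exact le_sup (f := fun l => G i l + E l t) (mem_univ k)

theorem exists_monomialMat_of_mul_eq (hG : FullRowRank G) (hdiag : ∀ i, E i i = 0)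
    (hGE : tropMulMat G E = G) (hGG' : tropMulMat G G' = E) (hG'G : tropMulMat G' G = E) :
    ∃ σ d, G = tropMulMat (monomialMat σ d) E := by
  choose φ a ha using exists_row_eq_coe_add_row hdiag hGE hGG' hG'G
  have hφ : Function.Injective φ := fun i j hij =>
    hG.eq_of_row_eq_add_row (c := ((a i - a j : ℝ) : Trop)) fun t => by
      rw [ha i, ha j, hij, ← add_assoc, ← WithBot.coe_add, sub_add_cancel]
  refine ⟨(Equiv.ofBijective φ (Finite.injective_iff_bijective.1 hφ)).symm, a, ?_⟩
  ext i t
  rw [monomialMat_mul_apply, Equiv.symm_symm, Equiv.ofBijective_apply, ha]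

end Inverse

theorem monomial_rep_of_fullRowRank {n : ℕ}
    (S : Set (Matrix (Fin n) (Fin n) Trop)) (hS : IsMatSubgroup S)
    (E : Matrix (Fin n) (Fin n) Trop) (hE : E ∈ S)
    (hEneut : ∀ G ∈ S, tropMulMat E G = G ∧ tropMulMat G E = G)
    (hfull : ∀ G ∈ S, FullRowRank G) :
    (∀ G ∈ S, ∃! P : Matrix (Fin n) (Fin n) Trop,
        IsMonomial P ∧ G = tropMulMat P E) ∧
    ∃ ψ : Matrix (Fin n) (Fin n) Trop → Matrix (Fin n) (Fin n) Trop,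
      (∀ G ∈ S, IsMonomial (ψ G) ∧ G = tropMulMat (ψ G) E) ∧
      Set.InjOn ψ S ∧
      ∀ G ∈ S, ∀ H ∈ S, ψ (tropMulMat G H) = tropMulMat (ψ G) (ψ H) := by
  obtain ⟨hmul, E₀, hE₀, hE₀neut, hinv⟩ := hS
  obtain rfl : E₀ = E := (hEneut E₀ hE₀).2.symm.trans (hE₀neut E hE).1
  have hdiag := (hfull E₀ hE).diag_eq_zero_of_idempotent (hEneut E₀ hE).1
  have hrep : ∀ G ∈ S, ∃! P, IsMonomial P ∧ G = tropMulMat P E₀ := fun G hG => by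
    obtain ⟨G', -, hGG', hG'G⟩ := hinv G hG
    obtain ⟨σ, d, hGd⟩ :=
      exists_monomialMat_of_mul_eq (hfull G hG) hdiag (hEneut G hG).2 hGG' hG'G
    exact ⟨_, ⟨isMonomial_monomialMat σ d, hGd⟩, fun Q hQ =>
      hQ.1.eq_of_tropMulMat_eq (isMonomial_monomialMat σ d) (hfull E₀ hE)
        (hQ.2.symm.trans hGd)⟩
  refine ⟨hrep, ?_⟩
  choose! ψ hψ hψ_unique using hrep
  refine ⟨ψ, hψ, fun G hG H hH h => (hψ G hG).2.trans (h ▸ (hψ H hH).2.symm), ?_⟩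
  intro G hG H hH
  refine (hψ_unique _ (hmul G hG H hH) _ ⟨(hψ G hG).1.mul (hψ H hH).1, ?_⟩).symm
  calc tropMulMat G H = tropMulMat (ψ G) (tropMulMat E₀ H) := by
        rw [← tropMulMat_assoc, ← (hψ G hG).2]
    _ = tropMulMat (tropMulMat (ψ G) (ψ H)) E₀ := by
        rw [(hEneut H hH).1, tropMulMat_assoc, ← (hψ H hH).2]
end

section
/- Every periodic group admitting a faithful representation by n×n tropical matrices is finite; that is, if 𝒢 is a group in which every element has finite order and there exists an injective map φ : 𝒢 → 𝕋^{n×n} with φ(gh) = φ(g) ⊗ φ(h) for all g, h ∈ 𝒢, then 𝒢 is finite. -/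
/-
Put `E = φ 1`, an idempotent. Every finite entry of an idempotent tropical matrix factors
through an index `d` with `E d d = 0`, so a matrix `A` with `E ⊗ A = A` is determined by its
rows indexed by such `d`. For each such `d`, the relation `φ g ⊗ φ g⁻¹ = E` forces row `d` of
`φ g` to be a real translate of some row `κ g d` of `E`. If `κ g = κ h`, then the rows `d` of
`φ (h * g⁻¹)` are translates of the corresponding rows of `E`; the translation amounts are
additive under powers, hence vanish because `h * g⁻¹` has finite order. So `φ (h * g⁻¹) = E`,
i.e. `g = h`, and the map `κ` into the finite set of index maps is injective.
-/
open Finset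

section TropMulMat

variable {n m p : ℕ}

lemma le_tropMulMat (A : Matrix (Fin n) (Fin m) Trop) (B : Matrix (Fin m) (Fin p) Trop)
    (i : Fin n) (k : Fin m) (j : Fin p) : A i k + B k j ≤ tropMulMat A B i j :=
  le_sup (f := fun k => A i k + B k j) (mem_univ k)

lemma tropMulMat_le_iff {A : Matrix (Fin n) (Fin m) Trop} {B : Matrix (Fin m) (Fin p) Trop}
    {i : Fin n} {j : Fin p} {x : Trop} :
    tropMulMat A B i j ≤ x ↔ ∀ k, A i k + B k j ≤ x := by
  simp [tropMulMat]

lemma exists_add_eq_tropMulMat {A : Matrix (Fin n) (Fin m) Trop}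
    {B : Matrix (Fin m) (Fin p) Trop} {i : Fin n} {j : Fin p} (h : tropMulMat A B i j ≠ ⊥) :
    ∃ k, A i k + B k j = tropMulMat A B i j := by
  have hne : (univ : Finset (Fin m)).Nonempty :=
    nonempty_of_ne_empty fun he => h (by simp [tropMulMat, he])
  obtain ⟨k, -, hk⟩ := exists_mem_eq_sup univ hne fun k => A i k + B k j
  exact ⟨k, hk.symm⟩

lemma tropMulMat_eq_add_of_row_eq_add {A A' : Matrix (Fin n) (Fin m) Trop} {i : Fin n} {c : Trop}
    (h : ∀ k, A' i k = c + A i k) (B : Matrix (Fin m) (Fin p) Trop) (j : Fin p) :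
    tropMulMat A' B i j = c + tropMulMat A B i j := by
  simp only [tropMulMat, h, add_assoc]
  exact (apply_sup_eq_sup_comp (c + ·) (fun x y => (max_add_add_left c x y).symm)
    (WithBot.add_bot c)).symm

end TropMulMat

lemma Function.exists_iterate_succ_eq_self {α : Type*} [Finite α] [Nonempty α] (f : α → α) :
    ∃ x L, f^[L + 1] x = x := by
  obtain ⟨x₀⟩ := ‹Nonempty α›
  obtain ⟨p, q, hpq, heq⟩ := Finite.exists_ne_map_eq_of_infinite fun t => f^[t] x₀
  wlog hlt : p < q generalizing p q
  · exact this q p hpq.symm heq.symm (hpq.lt_or_gt.resolve_left hlt)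
  refine ⟨f^[p] x₀, q - p - 1, ?_⟩
  rw [← Function.iterate_add_apply, show q - p - 1 + 1 + p = q by omega]
  exact heq.symm

lemma WithBot.eq_zero_of_le_add_of_add_self_le {x y : WithBot ℝ} (hx : x ≠ ⊥)
    (hxy : x ≤ x + y) (hy : y + y ≤ y) : y = 0 := by
  induction x using WithBot.recBotCoe with
  | bot => exact absurd rfl hx
  | coe a =>
    induction y using WithBot.recBotCoe with
    | bot => simp at hxy
    | coe b =>
      norm_cast at hxy hy ⊢
      linarith

section Idempotent

variable {n : ℕ} {E : Matrix (Fin n) (Fin n) Trop}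

lemma add_le_of_tropMulMat_self_eq (hE : tropMulMat E E = E) (a b c : Fin n) :
    E a b + E b c ≤ E a c :=
  (le_tropMulMat E E a b c).trans_eq (by rw [hE])

lemma exists_diag_eq_zero_of_tropMulMat_self_eq (hE : tropMulMat E E = E) {i j : Fin n}
    (hij : E i j ≠ ⊥) : ∃ d, E d d = 0 ∧ E i d + E d j = E i j := by
  let K := {k // E i k + E k j = E i j}
  have ne_bot (k : K) : E i k ≠ ⊥ := fun h => hij (by rw [← k.2, h, WithBot.bot_add])
  have pred (k : K) : ∃ l : K, E i l + E l k = E i k := by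
    obtain ⟨l, hl⟩ := exists_add_eq_tropMulMat (i := i) (j := k.1) (by rw [hE]; exact ne_bot k)
    rw [hE] at hl
    refine ⟨⟨l, le_antisymm (add_le_of_tropMulMat_self_eq hE i l j) ?_⟩, hl⟩
    calc E i j = E i l + E l k + E k j := by rw [hl, k.2]
      _ ≤ E i l + E l j := by
        rw [add_assoc]; gcongr; exact add_le_of_tropMulMat_self_eq hE l k j
  -- Walking back along optimal predecessors `π` must close a cycle, and a cycle through `d`
  -- gives `E i d ≤ E i d + E d d`.
  choose π hπ using pred
  have chain (t : ℕ) (k : K) : E i k ≤ E i (π^[t + 1] k) + E (π^[t + 1] k) k := by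
    induction t with
    | zero => exact (hπ k).ge
    | succ t ih =>
      rw [Function.iterate_succ_apply']
      set y := π^[t + 1] k
      calc E i k ≤ E i y + E y k := ih
        _ = E i (π y) + E (π y) y + E y k := by rw [hπ]
        _ ≤ E i (π y) + E (π y) k := by
          rw [add_assoc]; gcongr; exact add_le_of_tropMulMat_self_eq hE _ _ _
  obtain ⟨k₀, hk₀⟩ := exists_add_eq_tropMulMat (hE ▸ hij)
  rw [hE] at hk₀
  have : Nonempty K := ⟨⟨k₀, hk₀⟩⟩
  obtain ⟨d, L, hd⟩ := Function.exists_iterate_succ_eq_self π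
  have hle := chain L d
  rw [hd] at hle
  exact ⟨d, WithBot.eq_zero_of_le_add_of_add_self_le (ne_bot d) hle
    (add_le_of_tropMulMat_self_eq hE d d d), d.2⟩

lemma le_of_rows_le_of_diag_eq_zero (hE : tropMulMat E E = E) {A B : Matrix (Fin n) (Fin n) Trop}
    (hA : tropMulMat E A = A) (hB : tropMulMat E B = B)
    (h : ∀ d, E d d = 0 → ∀ j, A d j ≤ B d j) (i j : Fin n) : A i j ≤ B i j := by
  rw [← hA, tropMulMat_le_iff]
  intro k
  by_cases hik : E i k = ⊥
  · simp [hik]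
  obtain ⟨d, hd, hdk⟩ := exists_diag_eq_zero_of_tropMulMat_self_eq hE hik
  calc E i k + A k j = E i d + (E d k + A k j) := by rw [← hdk, add_assoc]
    _ ≤ E i d + A d j := by gcongr; exact (le_tropMulMat E A d k j).trans_eq (by rw [hA])
    _ ≤ E i d + B d j := by gcongr; exact h d hd j
    _ ≤ B i j := (le_tropMulMat E B i d j).trans_eq (by rw [hB])

lemma eq_of_rows_eq_of_diag_eq_zero (hE : tropMulMat E E = E) {A B : Matrix (Fin n) (Fin n) Trop}
    (hA : tropMulMat E A = A) (hB : tropMulMat E B = B)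
    (h : ∀ d, E d d = 0 → ∀ j, A d j = B d j) : A = B :=
  funext fun i => funext fun j => le_antisymm
    (le_of_rows_le_of_diag_eq_zero hE hA hB (fun d hd j => (h d hd j).le) i j)
    (le_of_rows_le_of_diag_eq_zero hE hB hA (fun d hd j => (h d hd j).ge) i j)

end Idempotent

section Representation

variable {n : ℕ} {G : Type*} [Group G] {φ : G → Matrix (Fin n) (Fin n) Trop}

lemma tropMulMat_one_left (hmul : ∀ g h : G, φ (g * h) = tropMulMat (φ g) (φ h)) (g : G) :
    tropMulMat (φ 1) (φ g) = φ g := by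
  rw [← hmul, one_mul]

lemma exists_row_eq_add_row_one (hmul : ∀ g h : G, φ (g * h) = tropMulMat (φ g) (φ h))
    {i : Fin n} (hi : φ 1 i i = 0) (g : G) :
    ∃ k, ∃ c : ℝ, ∀ j, φ g i j = c + φ 1 k j := by
  have hii : tropMulMat (φ g) (φ g⁻¹) i i = 0 := by rw [← hmul, mul_inv_cancel, hi]
  obtain ⟨k, hk⟩ := exists_add_eq_tropMulMat (hii ▸ WithBot.zero_ne_bot)
  rw [hii] at hk
  obtain ⟨c, hc⟩ : ∃ c : ℝ, (c : Trop) = φ g i k := WithBot.ne_bot_iff_exists.1 fun h => by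
    rw [h, WithBot.bot_add] at hk; exact WithBot.bot_ne_zero hk
  refine ⟨k, c, fun j => le_antisymm ?_ ?_⟩
  · calc φ g i j = φ g i k + (φ g⁻¹ k i + φ g i j) := by rw [← add_assoc, hk, zero_add]
      _ ≤ c + φ 1 k j := by
        rw [hc, ← inv_mul_cancel g, hmul]; gcongr; exact le_tropMulMat _ _ _ _ _
  · calc (c : Trop) + φ 1 k j ≤ tropMulMat (φ g) (φ 1) i j := hc ▸ le_tropMulMat _ _ _ _ _
      _ = φ g i j := by rw [← hmul, mul_one]

lemma row_mul_inv_eq_add (hmul : ∀ g h : G, φ (g * h) = tropMulMat (φ g) (φ h))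
    {g h : G} {i k : Fin n} {c c' : ℝ} (hg : ∀ j, φ g i j = c + φ 1 k j)
    (hh : ∀ j, φ h i j = c' + φ 1 k j) (j : Fin n) :
    φ (h * g⁻¹) i j = ((c' - c : ℝ) : Trop) + φ 1 i j := by
  have hhg (l : Fin n) : φ h i l = ((c' - c : ℝ) : Trop) + φ g i l := by
    rw [hh, hg, ← add_assoc, ← WithBot.coe_add, sub_add_cancel]
  rw [hmul, tropMulMat_eq_add_of_row_eq_add hhg, ← hmul, mul_inv_cancel]

lemma row_pow_eq_add (hmul : ∀ g h : G, φ (g * h) = tropMulMat (φ g) (φ h))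
    {x : G} {i : Fin n} {e : ℝ} (he : ∀ j, φ x i j = e + φ 1 i j) (t : ℕ) (j : Fin n) :
    φ (x ^ t) i j = ((t * e : ℝ) : Trop) + φ 1 i j := by
  induction t generalizing j with
  | zero => simp
  | succ t ih =>
    rw [pow_succ', hmul, tropMulMat_eq_add_of_row_eq_add he, tropMulMat_one_left hmul, ih,
      ← add_assoc, ← WithBot.coe_add]
    congr 2
    push_cast
    ring

lemma row_eq_row_one_of_isOfFinOrder (hmul : ∀ g h : G, φ (g * h) = tropMulMat (φ g) (φ h))
    {x : G} (hx : IsOfFinOrder x) {i : Fin n} (hi : φ 1 i i = 0) {e : ℝ}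
    (he : ∀ j, φ x i j = e + φ 1 i j) (j : Fin n) : φ x i j = φ 1 i j := by
  obtain ⟨m, hm, hxm⟩ := isOfFinOrder_iff_pow_eq_one.1 hx
  have h := row_pow_eq_add hmul he m i
  rw [hxm, hi, add_zero] at h
  have he0 : e = 0 := by
    norm_cast at h
    exact (mul_eq_zero.1 h.symm).resolve_left (by positivity)
  rw [he, he0, WithBot.coe_zero, zero_add]

end Representation

theorem finite_of_periodic_tropical_rep {n : ℕ}
    (G : Type*) [Group G] (hper : ∀ g : G, IsOfFinOrder g)
    (φ : G → Matrix (Fin n) (Fin n) Trop)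
    (hinj : Function.Injective φ)
    (hmul : ∀ g h : G, φ (g * h) = tropMulMat (φ g) (φ h)) :
    Finite G := by
  choose κ c hκ using fun (g : G) (d : {d // φ 1 d d = 0}) =>
    exists_row_eq_add_row_one hmul d.2 g
  refine Finite.of_injective κ fun g h hgh => ?_
  have hrows (d : Fin n) (hd : φ 1 d d = 0) (j : Fin n) : φ (h * g⁻¹) d j = φ 1 d j := by
    have hh := hκ h ⟨d, hd⟩
    rw [← congrFun hgh] at hh
    exact row_eq_row_one_of_isOfFinOrder hmul (hper _) hd
      (row_mul_inv_eq_add hmul (hκ g ⟨d, hd⟩) hh) j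
  have hE : tropMulMat (φ 1) (φ 1) = φ 1 := tropMulMat_one_left hmul 1
  have hone : φ (h * g⁻¹) = φ 1 :=
    eq_of_rows_eq_of_diag_eq_zero hE (tropMulMat_one_left hmul _) hE hrows
  exact (mul_inv_eq_one.1 (hinj hone)).symm
end
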